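/- arXiv:2008.02838 — 6 statements merged into one kernel-verified Lean document; each statement's English description precedes it below -/
import Mathlib

section
/- Let H be a real Hilbert space, a, b > 0, μ > 0, and φ : H → ℝ a nonzero continuous linear functional. Define I(u) = (a/2)‖u‖² − (b/4)‖u‖⁴ − μ·φ(u), and for u ∈ H let I′(u) be the continuous linear functional v ↦ (a − b‖u‖²)·⟨u, v⟩ − μ·φ(v). If c is a real number with c ≥ −a²/(12b) and c ≠ a²/(4b), then every sequence (u_n) in H with I(u_n) → c and ‖I′(u_n)‖ → 0 (in the dual norm) has a subsequence converging strongly in H. -/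
/-!
Write `d n = a - b‖uₙ‖²`. The functionals `d n • ⟪uₙ, ·⟫` converge to `μ • φ`, so their norms
`|d n| ‖uₙ‖` are bounded; as `b > 0` this bounds `‖uₙ‖`, and along a subsequence `‖uₙ‖ → s₀`.
If `a - b s₀² = 0`, the bounded sequence `⟪uₙ, ·⟫` would force `μ • φ = 0`. Otherwise
`⟪uₙ, ·⟫ → (a - b s₀²)⁻¹ • μ • φ`, and the Riesz isometry `H ≃ H*` turns this into strong
convergence of `uₙ`.
-/

open Filter Topology

lemma le_max_of_abs_sub_mul_sq_mul_le {a b s K : ℝ} (hb : 0 < b) (hs : 0 ≤ s)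
    (h : |a - b * s ^ 2| * s ≤ K) : s ≤ max 1 ((K + |a|) / b) := by
  by_contra! hlt
  have hs1 : 1 < s := (le_max_left _ _).trans_lt hlt
  have hbs : K + |a| < b * s := (div_lt_iff₀' hb).mp ((le_max_right _ _).trans_lt hlt)
  have hK : 0 ≤ K := (mul_nonneg (abs_nonneg _) hs).trans h
  have hdiff : b * s ^ 2 - |a| ≤ |a - b * s ^ 2| := by
    rw [abs_sub_comm]; linarith [le_abs_self (b * s ^ 2 - a), le_abs_self a]
  have hK_lt : K < b * s ^ 2 - |a| := by
    nlinarith [mul_le_mul_of_nonneg_left hs1.le (mul_nonneg hb.le hs)]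
  have : K < |a - b * s ^ 2| * s :=
    calc K ≤ K * s := le_mul_of_one_le_right hK hs1.le
      _ < (b * s ^ 2 - |a|) * s := mul_lt_mul_of_pos_right hK_lt (by linarith)
      _ ≤ |a - b * s ^ 2| * s := mul_le_mul_of_nonneg_right hdiff hs
  linarith

lemma tendsto_of_tendsto_smul_innerSL {H ι : Type*} [NormedAddCommGroup H]
    [InnerProductSpace ℝ H] [CompleteSpace H] {l : Filter ι} {r : ι → ℝ} {x : ι → H} {r₀ : ℝ}
    {f : StrongDual ℝ H} (hr : Tendsto r l (𝓝 r₀)) (hr₀ : r₀ ≠ 0)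
    (hx : Tendsto (fun i => r i • innerSL ℝ (x i)) l (𝓝 f)) :
    Tendsto x l (𝓝 ((InnerProductSpace.toDual ℝ H).symm (r₀⁻¹ • f))) := by
  have hinner : Tendsto (fun i => innerSL ℝ (x i)) l (𝓝 (r₀⁻¹ • f)) := by
    refine ((hr.inv₀ hr₀).smul hx).congr' ?_
    filter_upwards [hr.eventually_ne hr₀] with i hi
    exact inv_smul_smul₀ hi _
  have hcont := ((InnerProductSpace.toDual ℝ H).symm.continuous.tendsto _).comp hinner
  exact hcont.congr fun i => (InnerProductSpace.toDual ℝ H).symm_apply_apply (x i)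

theorem stmt_2_general {H : Type*} [NormedAddCommGroup H] [InnerProductSpace ℝ H] [CompleteSpace H]
    (a b μ : ℝ) (hb : 0 < b) (hμ : 0 < μ)
    (φ : H →L[ℝ] ℝ) (hφ : φ ≠ 0)
    (u : ℕ → H)
    (hI' : Tendsto (fun n => ‖(a - b * ‖u n‖ ^ 2) • innerSL ℝ (u n) - μ • φ‖) atTop (𝓝 0)) :
    ∃ (σ : ℕ → ℕ) (u₀ : H), StrictMono σ ∧ Tendsto (fun n => u (σ n)) atTop (𝓝 u₀) := by
  have hA := tendsto_iff_norm_sub_tendsto_zero.mpr hI'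
  obtain ⟨K, hK⟩ := hA.norm.bddAbove_range
  have hbound (n : ℕ) : ‖u n‖ ∈ Set.Icc 0 (max 1 ((K + |a|) / b)) := by
    refine ⟨norm_nonneg _, le_max_of_abs_sub_mul_sq_mul_le hb (norm_nonneg _) ?_⟩
    simpa [norm_smul, innerSL_apply_norm] using hK ⟨n, rfl⟩
  obtain ⟨s₀, -, σ, hσ, hs₀⟩ := isCompact_Icc.tendsto_subseq hbound
  have hd : Tendsto (fun n => a - b * ‖u (σ n)‖ ^ 2) atTop (𝓝 (a - b * s₀ ^ 2)) :=
    tendsto_const_nhds.sub ((hs₀.pow 2).const_mul b)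
  have hAσ := hA.comp hσ.tendsto_atTop
  have hd₀ : a - b * s₀ ^ 2 ≠ 0 := by
    intro h0
    rw [h0] at hd
    have hzero : Tendsto (fun n => (a - b * ‖u (σ n)‖ ^ 2) • innerSL ℝ (u (σ n))) atTop (𝓝 0) :=
      hd.zero_smul_isBoundedUnder_le <|
        isBoundedUnder_of ⟨_, fun n => (innerSL_apply_norm ℝ (u (σ n))).trans_le (hbound (σ n)).2⟩
    exact smul_ne_zero hμ.ne' hφ (tendsto_nhds_unique hAσ hzero)
  exact ⟨σ, _, hσ, tendsto_of_tendsto_smul_innerSL hd hd₀ hAσ⟩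

theorem stmt_2 {H : Type*} [NormedAddCommGroup H] [InnerProductSpace ℝ H] [CompleteSpace H]
    (a b μ : ℝ) (ha : 0 < a) (hb : 0 < b) (hμ : 0 < μ)
    (φ : H →L[ℝ] ℝ) (hφ : φ ≠ 0)
    (c : ℝ) (hc₁ : -a ^ 2 / (12 * b) ≤ c) (hc₂ : c ≠ a ^ 2 / (4 * b))
    (u : ℕ → H)
    (hI : Tendsto (fun n => a / 2 * ‖u n‖ ^ 2 - b / 4 * ‖u n‖ ^ 4 - μ * φ (u n)) atTop (𝓝 c))
    (hI' : Tendsto (fun n => ‖(a - b * ‖u n‖ ^ 2) • innerSL ℝ (u n) - μ • φ‖) atTop (𝓝 0)) :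
    ∃ (σ : ℕ → ℕ) (u₀ : H), StrictMono σ ∧ Tendsto (fun n => u (σ n)) atTop (𝓝 u₀) :=
  stmt_2_general a b μ hb hμ φ hφ u hI'
end

section
/- Let H be a real normed space, a, b > 0, K > 0, and φ : H → ℝ a linear functional with |φ(u)| ≤ K·‖u‖ for all u ∈ H. Define I(u) = (a/2)‖u‖² − (b/4)‖u‖⁴ − μ·φ(u). If 0 < μ ≤ (a/(18b))·√(6ab)/K, then for every u ∈ H with ‖u‖ = √(2a/(3b)) one has I(u) ≥ a²/(9b). -/
/-!
On the sphere `‖u‖ = t₀ := √(2a/(3b))`, the maximum point of the radial profile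
`t ↦ (a/2)t² − (b/4)t⁴`, the quadratic and quartic terms contribute `2a²/(9b)`.
The linear perturbation costs at most `μ K t₀`, and since `√(6ab) · t₀ = 2a` the
bound on `μ` makes this at most `a²/(9b)`.
-/

namespace Real

lemma quartic_profile_at_sqrt {a b : ℝ} (ha : 0 < a) (hb : 0 < b) :
    a / 2 * √(2 * a / (3 * b)) ^ 2 - b / 4 * √(2 * a / (3 * b)) ^ 4 = 2 * (a ^ 2 / (9 * b)) := by
  have hsq : √(2 * a / (3 * b)) ^ 2 = 2 * a / (3 * b) := sq_sqrt (by positivity)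
  rw [show (4 : ℕ) = 2 * 2 from rfl, pow_mul, hsq]
  field_simp
  ring

lemma sqrt_six_mul_mul_sqrt_two_div_three {a b : ℝ} (ha : 0 < a) (hb : 0 < b) :
    √(6 * a * b) * √(2 * a / (3 * b)) = 2 * a := by
  have hprod : 6 * a * b * (2 * a / (3 * b)) = (2 * a) ^ 2 := by
    field_simp
    ring
  rw [← sqrt_mul (by positivity), hprod, sqrt_sq (by positivity)]

end Real

theorem stmt_4 {H : Type*} [NormedAddCommGroup H] [NormedSpace ℝ H]
    (a b K μ : ℝ) (ha : 0 < a) (hb : 0 < b) (hK : 0 < K)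
    (φ : H →ₗ[ℝ] ℝ) (hφ : ∀ u : H, |φ u| ≤ K * ‖u‖)
    (hμ₀ : 0 < μ) (hμ : μ ≤ (a / (18 * b)) * Real.sqrt (6 * a * b) / K) :
    ∀ u : H, ‖u‖ = Real.sqrt (2 * a / (3 * b)) →
      a ^ 2 / (9 * b) ≤ a / 2 * ‖u‖ ^ 2 - b / 4 * ‖u‖ ^ 4 - μ * φ u := by
  intro u hu
  have hperturb : μ * φ u ≤ a ^ 2 / (9 * b) :=
    calc μ * φ u ≤ μ * (K * ‖u‖) :=
          mul_le_mul_of_nonneg_left ((le_abs_self _).trans (hφ u)) hμ₀.le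
      _ ≤ a / (18 * b) * √(6 * a * b) / K * (K * ‖u‖) :=
          mul_le_mul_of_nonneg_right hμ (by positivity)
      _ = a / (18 * b) * (√(6 * a * b) * ‖u‖) := by field_simp
      _ = a ^ 2 / (9 * b) := by
          rw [hu, Real.sqrt_six_mul_mul_sqrt_two_div_three ha hb]
          field_simp
          ring
  rw [hu, Real.quartic_profile_at_sqrt ha hb]
  linarith
end

section
/- Let H be a real normed space, a, b > 0, μ > 0, and φ : H → ℝ a continuous linear functional. Define I(u) = (a/2)‖u‖² − (b/4)‖u‖⁴ − μ·φ(u). If there exists ũ ∈ H with φ(ũ) > 0, then there exists u ∈ H with ‖u‖ ≤ √(2a/(3b)) and I(u) < 0; in particular the infimum of I over the closed ball {u : ‖u‖ ≤ √(2a/(3b))} is negative. -/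
/-!
Along the ray `t ↦ t • u₀` the energy is `t * (a/2 * t * ‖u₀‖² - b/4 * t³ * ‖u₀‖⁴ - μ φ u₀)`;
the bracket tends to `-μ φ u₀ < 0` as `t → 0`, so `I (t • u₀) < 0` for all small `t > 0`, and for
such `t` the point `t • u₀` also lies in the ball. On a ball the energy is bounded below, so its
infimum there is at most this negative value.
-/

open Filter Topology

noncomputable section

namespace Kirchhoff

variable {H : Type*} [NormedAddCommGroup H] [NormedSpace ℝ H]

def energy (a b μ : ℝ) (φ : H →L[ℝ] ℝ) (u : H) : ℝ :=
  a / 2 * ‖u‖ ^ 2 - b / 4 * ‖u‖ ^ 4 - μ * φ u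

variable {a b μ : ℝ} {φ : H →L[ℝ] ℝ}

theorem energy_smul_of_nonneg {t : ℝ} (ht : 0 ≤ t) (u : H) :
    energy a b μ φ (t • u) =
      t * (a / 2 * t * ‖u‖ ^ 2 - b / 4 * t ^ 3 * ‖u‖ ^ 4 - μ * φ u) := by
  simp only [energy, norm_smul, Real.norm_of_nonneg ht, map_smul, smul_eq_mul]
  ring

theorem eventually_energy_smul_neg {u : H} (hu : 0 < μ * φ u) :
    ∀ᶠ t in 𝓝[>] (0 : ℝ), energy a b μ φ (t • u) < 0 := by
  have hbracket : ∀ᶠ t in 𝓝 (0 : ℝ),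
      a / 2 * t * ‖u‖ ^ 2 - b / 4 * t ^ 3 * ‖u‖ ^ 4 - μ * φ u < 0 := by
    have hcont : Continuous fun t : ℝ =>
        a / 2 * t * ‖u‖ ^ 2 - b / 4 * t ^ 3 * ‖u‖ ^ 4 - μ * φ u := by fun_prop
    exact hcont.continuousAt.eventually_lt continuousAt_const (by simpa using hu)
  filter_upwards [hbracket.filter_mono nhdsWithin_le_nhds, self_mem_nhdsWithin]
    with t hneg (ht : 0 < t)
  rw [energy_smul_of_nonneg ht.le]
  exact mul_neg_of_pos_of_neg ht hneg

theorem eventually_norm_smul_le {R : ℝ} (hR : 0 < R) (u : H) :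
    ∀ᶠ t in 𝓝 (0 : ℝ), ‖t • u‖ ≤ R := by
  have hsmul : Tendsto (fun t : ℝ => t • u) (𝓝 0) (𝓝 0) := by
    simpa using (tendsto_id (x := 𝓝 (0 : ℝ))).smul_const u
  filter_upwards [hsmul (Metric.closedBall_mem_nhds 0 hR)] with t ht
  simpa using ht

theorem energy_ge_of_norm_le (ha : 0 ≤ a) (hb : 0 ≤ b) {R : ℝ} {u : H} (hu : ‖u‖ ≤ R) :
    -(b / 4 * R ^ 4 + |μ| * ‖φ‖ * R) ≤ energy a b μ φ u := by
  have hquartic : ‖u‖ ^ 4 ≤ R ^ 4 := pow_le_pow_left₀ (norm_nonneg u) hu 4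
  have hlinear : μ * φ u ≤ |μ| * ‖φ‖ * R :=
    calc μ * φ u ≤ |μ| * |φ u| := by rw [← abs_mul]; exact le_abs_self _
      _ ≤ |μ| * (‖φ‖ * R) := by
        gcongr
        exact (φ.le_opNorm u).trans (by gcongr)
      _ = |μ| * ‖φ‖ * R := by ring
  have : 0 ≤ a / 2 * ‖u‖ ^ 2 := by positivity
  unfold energy
  nlinarith

theorem bddBelow_energy_image (ha : 0 ≤ a) (hb : 0 ≤ b) (R : ℝ) :
    BddBelow (energy a b μ φ '' {u : H | ‖u‖ ≤ R}) := by
  refine ⟨-(b / 4 * R ^ 4 + |μ| * ‖φ‖ * R), ?_⟩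
  rintro _ ⟨u, hu, rfl⟩
  exact energy_ge_of_norm_le ha hb hu

end Kirchhoff

end

open Kirchhoff in
theorem stmt_5 {H : Type*} [NormedAddCommGroup H] [NormedSpace ℝ H]
    (a b μ : ℝ) (ha : 0 < a) (hb : 0 < b) (hμ : 0 < μ)
    (φ : H →L[ℝ] ℝ) (u₀ : H) (hu₀ : 0 < φ u₀) :
    (∃ u : H, ‖u‖ ≤ Real.sqrt (2 * a / (3 * b)) ∧
      a / 2 * ‖u‖ ^ 2 - b / 4 * ‖u‖ ^ 4 - μ * φ u < 0) ∧
    sInf ((fun u : H => a / 2 * ‖u‖ ^ 2 - b / 4 * ‖u‖ ^ 4 - μ * φ u) ''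
      {u : H | ‖u‖ ≤ Real.sqrt (2 * a / (3 * b))}) < 0 := by
  set R := Real.sqrt (2 * a / (3 * b))
  have hR : 0 < R := Real.sqrt_pos.mpr (by positivity)
  obtain ⟨t, hball, hneg⟩ :=
    (((eventually_norm_smul_le hR u₀).filter_mono nhdsWithin_le_nhds).and
      (eventually_energy_smul_neg (mul_pos hμ hu₀))).exists
  refine ⟨⟨t • u₀, hball, hneg⟩, ?_⟩
  exact csInf_lt_of_lt (bddBelow_energy_image ha.le hb.le R) ⟨t • u₀, hball, rfl⟩ hneg
end

section
/- Let H be a real normed space, a, b > 0, K > 0, μ > 0, and φ : H → ℝ a linear functional with |φ(u)| ≤ K·‖u‖ for all u ∈ H. Define I(u) = (a/2)‖u‖² − (b/4)‖u‖⁴ − μ·φ(u). Then for every u ∈ H with ‖u‖² ≥ (2/b)·[a + (a² + b·μ²·K²/(2a))^{1/2}] one has I(u) ≤ 0. -/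
/-! Young's inequality bounds the linear term by `(a/2)‖u‖² + μ²K²/(2a)`, so
`I(u) ≤ a t + μ²K²/(2a) - (b/4) t²` with `t = ‖u‖²`; the threshold in the hypothesis is the
larger root of this quadratic in `t`. -/

lemma mul_le_half_mul_sq_add_sq_div {a : ℝ} (ha : 0 < a) (x y : ℝ) :
    x * y ≤ a / 2 * x ^ 2 + y ^ 2 / (2 * a) := by
  have hgap : a / 2 * x ^ 2 + y ^ 2 / (2 * a) - x * y = (a * x - y) ^ 2 / (2 * a) := by
    field_simp
    ring
  linarith [div_nonneg (sq_nonneg (a * x - y)) (by positivity : (0 : ℝ) ≤ 2 * a)]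

lemma add_le_quadratic_of_root_le {a b C t : ℝ} (hb : 0 < b)
    (ht : 2 / b * (a + √(a ^ 2 + b * C)) ≤ t) : a * t + C ≤ b / 4 * t ^ 2 := by
  have hroot : √(a ^ 2 + b * C) ≤ b * t / 2 - a := by
    rw [div_mul_eq_mul_div, div_le_iff₀' hb] at ht
    linarith
  have hsq : a ^ 2 + b * C ≤ (b * t / 2 - a) ^ 2 := (Real.sqrt_le_iff.mp hroot).2
  nlinarith

theorem stmt_6_general {H : Type*} [NormedAddCommGroup H] [NormedSpace ℝ H]
    (a b K μ : ℝ) (ha : 0 < a) (hb : 0 < b)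
    (φ : H →ₗ[ℝ] ℝ) (hφ : ∀ u : H, |φ u| ≤ K * ‖u‖) :
    ∀ u : H, (2 / b) * (a + Real.sqrt (a ^ 2 + b * μ ^ 2 * K ^ 2 / (2 * a))) ≤ ‖u‖ ^ 2 →
      a / 2 * ‖u‖ ^ 2 - b / 4 * ‖u‖ ^ 4 - μ * φ u ≤ 0 := by
  intro u hu
  have hlinear : -(μ * φ u) ≤ a / 2 * ‖u‖ ^ 2 + μ ^ 2 * K ^ 2 / (2 * a) :=
    calc -(μ * φ u) ≤ |μ| * |φ u| := by rw [← abs_mul]; exact neg_le_abs _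
      _ ≤ ‖u‖ * (|μ| * K) := by rw [mul_comm ‖u‖, mul_assoc]; gcongr; exact hφ u
      _ ≤ a / 2 * ‖u‖ ^ 2 + μ ^ 2 * K ^ 2 / (2 * a) := by
        simpa [mul_pow] using mul_le_half_mul_sq_add_sq_div ha ‖u‖ (|μ| * K)
  have hquadratic : a * ‖u‖ ^ 2 + μ ^ 2 * K ^ 2 / (2 * a) ≤ b / 4 * (‖u‖ ^ 2) ^ 2 :=
    add_le_quadratic_of_root_le hb (by rwa [← mul_div_assoc, ← mul_assoc])
  linarith [show ‖u‖ ^ 4 = (‖u‖ ^ 2) ^ 2 by ring]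

theorem stmt_6 {H : Type*} [NormedAddCommGroup H] [NormedSpace ℝ H]
    (a b K μ : ℝ) (ha : 0 < a) (hb : 0 < b) (hK : 0 < K) (hμ : 0 < μ)
    (φ : H →ₗ[ℝ] ℝ) (hφ : ∀ u : H, |φ u| ≤ K * ‖u‖) :
    ∀ u : H, (2 / b) * (a + Real.sqrt (a ^ 2 + b * μ ^ 2 * K ^ 2 / (2 * a))) ≤ ‖u‖ ^ 2 →
      a / 2 * ‖u‖ ^ 2 - b / 4 * ‖u‖ ^ 4 - μ * φ u ≤ 0 :=
  stmt_6_general a b K μ ha hb φ hφ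
end

section
/- Let a, b, β > 0 and define g : ℝ → ℝ by g(t) = (a − b·β·t²)·t − μ, and set μ** = 2a√(3ab)/(9b√β). Then for μ ∈ ℝ: (i) if 0 < |μ| < μ**, the equation g(t) = 0 has exactly three real solutions; (ii) if |μ| = μ**, it has exactly two real solutions; (iii) if |μ| > μ**, it has exactly one real solution. Moreover, in case (i) the three solutions T₁ < T₂ < T₃ satisfy T₁ < −√(a/(3bβ)) < T₂ < √(a/(3bβ)) < T₃. -/
/-!
With `s = √(a / (3 b β))` we have `a = 3 b β s²`, so the equation reads `3 s² t - t³ = μ / (b β)`,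
and `μ** = b β · 2 s³`. The odd cubic `3 s² t - t³` decreases on `(-∞, -s]`, increases on `[-s, s]`
and decreases on `[s, ∞)`, with critical values `∓2 s³`. Each monotone piece thus contains at most
one root, and the intermediate value theorem provides one in every piece whose range contains the
right-hand side. At the critical level the factorisation `3 s² t - t³ - 2 s³ = -(t - s)² (t + 2 s)`
exhibits the two roots, and above it shows that every root lies below `-2 s`.
-/

open Set

def critCubic (s t : ℝ) : ℝ := 3 * s ^ 2 * t - t ^ 3

namespace critCubic

variable {s μ : ℝ}

lemma neg_apply (t : ℝ) : critCubic s (-t) = -critCubic s t := by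
  unfold critCubic; ring

lemma apply_neg_self : critCubic s (-s) = -(2 * s ^ 3) := by
  unfold critCubic; ring

lemma apply_self : critCubic s s = 2 * s ^ 3 := by
  unfold critCubic; ring

lemma sub_apply (x y : ℝ) :
    critCubic s x - critCubic s y = (x - y) * (3 * s ^ 2 - (x ^ 2 + x * y + y ^ 2)) := by
  unfold critCubic; ring

lemma sub_two_mul_pow_three (t : ℝ) :
    critCubic s t - 2 * s ^ 3 = -((t - s) ^ 2 * (t + 2 * s)) := by
  unfold critCubic; ring

lemma add_two_mul_pow_three (t : ℝ) :
    critCubic s t + 2 * s ^ 3 = -((t + s) ^ 2 * (t - 2 * s)) := by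
  unfold critCubic; ring

lemma continuous : Continuous (critCubic s) := by
  unfold critCubic; fun_prop

lemma strictAntiOn_Iic (hs : 0 ≤ s) : StrictAntiOn (critCubic s) (Iic (-s)) := by
  intro x hx y hy hxy
  simp only [mem_Iic] at hx hy
  have hQ : 3 * s ^ 2 < x ^ 2 + x * y + y ^ 2 := by
    nlinarith [mul_nonneg_of_nonpos_of_nonpos (by linarith : y ≤ 0) (sub_neg.2 hxy).le,
      mul_pos_of_neg_of_neg (by linarith : x < 0) (sub_neg.2 hxy)]
  have := sub_apply (s := s) x y
  nlinarith [mul_pos_of_neg_of_neg (sub_neg.2 hxy) (sub_neg.2 hQ)]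

lemma strictMonoOn_Icc : StrictMonoOn (critCubic s) (Icc (-s) s) := by
  rintro x ⟨hx₁, hx₂⟩ y ⟨hy₁, hy₂⟩ hxy
  have hQ : y ^ 2 + y * x + x ^ 2 < 3 * s ^ 2 := by
    nlinarith [sq_abs x, sq_abs y, abs_le.2 ⟨hx₁, hx₂⟩, abs_le.2 ⟨hy₁, hy₂⟩]
  have := sub_apply (s := s) y x
  nlinarith [mul_pos (sub_pos.2 hxy) (sub_pos.2 hQ)]

lemma strictAntiOn_Ici (hs : 0 ≤ s) : StrictAntiOn (critCubic s) (Ici s) := by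
  intro x hx y hy hxy
  have := strictAntiOn_Iic hs (mem_Iic.2 (neg_le_neg hy)) (mem_Iic.2 (neg_le_neg hx))
    (neg_lt_neg hxy)
  rwa [neg_apply, neg_apply, neg_lt_neg_iff] at this

lemma exists_le_neg_eq (hs : 0 < s) (hμ : -(2 * s ^ 3) ≤ μ) :
    ∃ t ≤ -s, critCubic s t = μ := by
  set K := 2 * s + |μ| / s ^ 2 with hK_def
  have hK : 2 * s ≤ K := le_add_of_nonneg_right (by positivity)
  have hK_sq : s ^ 2 ≤ K ^ 2 - 3 * s ^ 2 := by nlinarith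
  have hμK : μ ≤ critCubic s (-K) :=
    calc μ ≤ |μ| := le_abs_self μ
      _ ≤ K * s ^ 2 := by rw [hK_def, add_mul, div_mul_cancel₀ _ (by positivity)]; nlinarith
      _ ≤ K * (K ^ 2 - 3 * s ^ 2) := mul_le_mul_of_nonneg_left hK_sq (by linarith)
      _ = critCubic s (-K) := by unfold critCubic; ring
  obtain ⟨t, ht, rfl⟩ := intermediate_value_Icc' (by linarith) continuous.continuousOn
    ⟨apply_neg_self.trans_le hμ, hμK⟩
  exact ⟨t, ht.2, rfl⟩

lemma exists_ge_eq (hs : 0 < s) (hμ : μ ≤ 2 * s ^ 3) : ∃ t ≥ s, critCubic s t = μ := by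
  obtain ⟨t, ht, hpt⟩ := exists_le_neg_eq (μ := -μ) hs (neg_le_neg hμ)
  exact ⟨-t, le_neg_of_le_neg ht, by rw [neg_apply, hpt, neg_neg]⟩

lemma exists_mem_Icc_eq (hs : 0 < s) (hμ : |μ| ≤ 2 * s ^ 3) :
    ∃ t ∈ Icc (-s) s, critCubic s t = μ := by
  rw [abs_le] at hμ
  exact intermediate_value_Icc (by linarith) continuous.continuousOn
    ⟨apply_neg_self.trans_le hμ.1, hμ.2.trans_eq apply_self.symm⟩

lemma setOf_eq_eq_triple (hs : 0 ≤ s) {T₁ T₂ T₃ : ℝ} (hT₁ : T₁ ≤ -s) (hT₂ : T₂ ∈ Icc (-s) s)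
    (hT₃ : s ≤ T₃) (h₁ : critCubic s T₁ = μ) (h₂ : critCubic s T₂ = μ)
    (h₃ : critCubic s T₃ = μ) : {t | critCubic s t = μ} = {T₁, T₂, T₃} := by
  ext t
  refine ⟨fun ht => ?_, by rintro (rfl | rfl | rfl) <;> assumption⟩
  rcases le_or_gt t (-s) with hl | hl
  · exact .inl ((strictAntiOn_Iic hs).injOn hl hT₁ (ht.trans h₁.symm))
  rcases le_or_gt t s with hr | hr
  · exact .inr (.inl (strictMonoOn_Icc.injOn ⟨hl.le, hr⟩ hT₂ (ht.trans h₂.symm)))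
  · exact .inr (.inr ((strictAntiOn_Ici hs).injOn hr.le hT₃ (ht.trans h₃.symm)))

lemma exists_setOf_eq_eq_triple (hs : 0 < s) (hμ : |μ| < 2 * s ^ 3) :
    ∃ T₁ T₂ T₃, {t | critCubic s t = μ} = {T₁, T₂, T₃} ∧
      T₁ < -s ∧ -s < T₂ ∧ T₂ < s ∧ s < T₃ := by
  obtain ⟨hlo, hhi⟩ := abs_lt.1 hμ
  obtain ⟨T₁, hT₁, h₁⟩ := exists_le_neg_eq hs hlo.le
  obtain ⟨T₂, hT₂, h₂⟩ := exists_mem_Icc_eq hs hμ.le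
  obtain ⟨T₃, hT₃, h₃⟩ := exists_ge_eq hs hhi.le
  refine ⟨T₁, T₂, T₃, setOf_eq_eq_triple hs.le hT₁ hT₂ hT₃ h₁ h₂ h₃, hT₁.lt_of_ne ?_,
    hT₂.1.lt_of_ne ?_, hT₂.2.lt_of_ne ?_, hT₃.lt_of_ne ?_⟩ <;>
  rintro rfl <;> simp only [apply_self, apply_neg_self] at h₁ h₂ h₃ <;> linarith

lemma setOf_eq_two_mul_pow_three : {t | critCubic s t = 2 * s ^ 3} = {-(2 * s), s} := by
  ext t
  rw [mem_ofPred_eq, ← sub_eq_zero, sub_two_mul_pow_three, neg_eq_zero, mul_eq_zero,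
    pow_eq_zero_iff two_ne_zero, sub_eq_zero, add_eq_zero_iff_eq_neg]
  simp only [mem_insert_iff, mem_singleton_iff, or_comm]

lemma setOf_eq_neg_two_mul_pow_three : {t | critCubic s t = -(2 * s ^ 3)} = {2 * s, -s} := by
  ext t
  rw [mem_ofPred_eq, ← sub_eq_zero, sub_neg_eq_add, add_two_mul_pow_three, neg_eq_zero,
    mul_eq_zero, pow_eq_zero_iff two_ne_zero, sub_eq_zero, add_eq_zero_iff_eq_neg]
  simp only [mem_insert_iff, mem_singleton_iff, or_comm]

lemma encard_setOf_eq_of_abs_eq (hs : 0 < s) (hμ : |μ| = 2 * s ^ 3) :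
    {t | critCubic s t = μ}.encard = 2 := by
  rcases (abs_eq (by positivity)).1 hμ with rfl | rfl
  · rw [setOf_eq_two_mul_pow_three, encard_pair (by linarith)]
  · rw [setOf_eq_neg_two_mul_pow_three, encard_pair (by linarith)]

lemma setOf_neg_eq : {t | critCubic s t = -μ} = -{t | critCubic s t = μ} := by
  ext t
  rw [mem_neg, mem_ofPred_eq, mem_ofPred_eq, neg_apply]
  exact neg_eq_iff_eq_neg.symm

lemma encard_setOf_eq_of_two_mul_pow_three_lt (hs : 0 < s) (hμ : 2 * s ^ 3 < μ) :
    {t | critCubic s t = μ}.encard = 1 := by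
  obtain ⟨T, hT, hpT⟩ := exists_le_neg_eq hs (by linarith [pow_pos hs 3] : -(2 * s ^ 3) ≤ μ)
  refine encard_eq_one.2 ⟨T, Set.ext fun t => ⟨fun ht => ?_, fun ht => ht ▸ hpT⟩⟩
  have hroot : t + 2 * s < 0 := by
    have := sub_two_mul_pow_three (s := s) t
    have : (t - s) ^ 2 * (t + 2 * s) < 0 := by rw [mem_ofPred_eq] at ht; linarith
    exact neg_of_mul_neg_right this (sq_nonneg _)
  exact (strictAntiOn_Iic hs.le).injOn (by simp only [mem_Iic]; linarith) hT (ht.trans hpT.symm)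

lemma encard_setOf_eq_of_two_mul_pow_three_lt_abs (hs : 0 < s) (hμ : 2 * s ^ 3 < |μ|) :
    {t | critCubic s t = μ}.encard = 1 := by
  rcases lt_abs.1 hμ with hμ | hμ
  · exact encard_setOf_eq_of_two_mul_pow_three_lt hs hμ
  · rw [← neg_neg μ, setOf_neg_eq, ← image_neg_eq_neg, neg_injective.encard_image]
    exact encard_setOf_eq_of_two_mul_pow_three_lt hs hμ

end critCubic

open critCubic in
theorem stmt_17 (a b β μ : ℝ) (ha : 0 < a) (hb : 0 < b) (hβ : 0 < β) :
    ((0 < |μ| ∧ |μ| < 2 * a * Real.sqrt (3 * a * b) / (9 * b * Real.sqrt β)) →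
      ({t : ℝ | (a - b * β * t ^ 2) * t - μ = 0}.encard = 3 ∧
       ∃ T₁ T₂ T₃ : ℝ, {t : ℝ | (a - b * β * t ^ 2) * t - μ = 0} = {T₁, T₂, T₃} ∧
         T₁ < -Real.sqrt (a / (3 * b * β)) ∧ -Real.sqrt (a / (3 * b * β)) < T₂ ∧
         T₂ < Real.sqrt (a / (3 * b * β)) ∧ Real.sqrt (a / (3 * b * β)) < T₃)) ∧
    (|μ| = 2 * a * Real.sqrt (3 * a * b) / (9 * b * Real.sqrt β) →
      {t : ℝ | (a - b * β * t ^ 2) * t - μ = 0}.encard = 2) ∧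
    (2 * a * Real.sqrt (3 * a * b) / (9 * b * Real.sqrt β) < |μ| →
      {t : ℝ | (a - b * β * t ^ 2) * t - μ = 0}.encard = 1) := by
  set c := b * β with hc_def
  have hc : 0 < c := by positivity
  set s := Real.sqrt (a / (3 * b * β)) with hs_def
  have hs : 0 < s := Real.sqrt_pos.2 (by positivity)
  have hcs : 3 * c * s ^ 2 = a := by
    rw [hs_def, Real.sq_sqrt (by positivity), hc_def]; field_simp
  have hs_eq : s = Real.sqrt (3 * a * b) / (3 * b * Real.sqrt β) := by
    rw [hs_def, Real.sqrt_eq_iff_eq_sq (by positivity) (by positivity), div_pow, mul_pow,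
      Real.sq_sqrt (by positivity), Real.sq_sqrt hβ.le]
    field_simp
  have hthreshold : 2 * a * Real.sqrt (3 * a * b) / (9 * b * Real.sqrt β) = c * (2 * s ^ 3) := by
    calc 2 * a * Real.sqrt (3 * a * b) / (9 * b * Real.sqrt β) = 2 * a / 3 * s := by
          rw [hs_eq]; field_simp; ring
      _ = c * (2 * s ^ 3) := by rw [← hcs]; ring
  obtain ⟨ν, rfl⟩ : ∃ ν, μ = c * ν := ⟨μ / c, by field_simp⟩
  have hroots : {t : ℝ | (a - c * t ^ 2) * t - c * ν = 0} = {t | critCubic s t = ν} := by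
    ext t
    have : (a - c * t ^ 2) * t - c * ν = c * (critCubic s t - ν) := by
      rw [← hcs]; unfold critCubic; ring
    rw [mem_ofPred_eq, mem_ofPred_eq, this, mul_eq_zero, sub_eq_zero, or_iff_right hc.ne']
  rw [hroots, hthreshold, abs_mul, abs_of_pos hc, mul_lt_mul_iff_right₀ hc,
    mul_right_inj' hc.ne', mul_lt_mul_iff_right₀ hc]
  refine ⟨fun ⟨_, hν⟩ => ?_, encard_setOf_eq_of_abs_eq hs,
    encard_setOf_eq_of_two_mul_pow_three_lt_abs hs⟩
  obtain ⟨T₁, T₂, T₃, hT, h₁, h₂, h₃, h₄⟩ := exists_setOf_eq_eq_triple hs hν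
  exact ⟨encard_eq_three.2 ⟨T₁, T₂, T₃, (h₁.trans h₂).ne, (h₁.trans (h₂.trans (h₃.trans h₄))).ne,
    (h₃.trans h₄).ne, hT⟩, T₁, T₂, T₃, hT, h₁, h₂, h₃, h₄⟩
end

section
/- Let H be a real Hilbert space, a, b > 0, and φ : H → ℝ a nonzero continuous linear functional with Riesz representative U ∈ H (i.e. ⟨U, v⟩ = φ(v) for all v ∈ H, U ≠ 0). Set μ** = 2a√(3ab)/(9b‖U‖). Then the set S_μ = {u ∈ H : (a − b‖u‖²)·⟨u, v⟩ = μ·φ(v) for all v ∈ H} satisfies: S_μ has exactly three elements if 0 < |μ| < μ**, exactly two elements if |μ| = μ**, and exactly one element if |μ| > μ**. Moreover every element of S_μ is a real scalar multiple of U. -/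
/-!
Testing the equation against every `v` turns it into `(a - b‖u‖²) • u = μ • U`; as `μ ≠ 0`, every
solution is `u = t • U` with `(a - b‖U‖² t²) t = μ`. The substitution `t = m s`, where
`3 b ‖U‖² m² = a`, normalizes this cubic to `3 s - s³ = ν`, and `|μ|` compares with the threshold
as `|ν|` compares with `2`. Roots of the normalized cubic are produced by the intermediate value
theorem on `[-2, -1]`, `[-1, 1]`, `[1, 2]` (or beyond `∓2` when `|ν| > 2`). Uniqueness is algebraic:
two distinct roots `x, y` satisfy `x² + x y + y² = 3`, so three distinct roots sum to `0`, which
leaves no room for a fourth, and a root with `|x| > 2` has no partner at all.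
-/

open RealInnerProductSpace

def cubicRoots (ν : ℝ) : Set ℝ := {s | 3 * s - s ^ 3 = ν}

section cubicRoots

variable {ν x y z : ℝ}

lemma cubicRoots_neg (ν : ℝ) : cubicRoots (-ν) = -cubicRoots ν := by
  ext s
  simp only [cubicRoots, Set.mem_ofPred_eq, Set.mem_neg]
  constructor <;> intro h <;> linarith

lemma encard_cubicRoots_neg (ν : ℝ) : (cubicRoots (-ν)).encard = (cubicRoots ν).encard := by
  rw [cubicRoots_neg, Set.encard_neg]

lemma exists_mem_cubicRoots_Ioo {l r : ℝ} (hlr : l ≤ r)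
    (hν : ν ∈ Set.uIoo (3 * l - l ^ 3) (3 * r - r ^ 3)) : ∃ s ∈ Set.Ioo l r, s ∈ cubicRoots ν := by
  have hp : ContinuousOn (fun s : ℝ ↦ 3 * s - s ^ 3) (Set.Icc l r) := by fun_prop
  rcases le_total (3 * l - l ^ 3) (3 * r - r ^ 3) with h | h
  · rw [Set.uIoo_of_le h] at hν
    exact intermediate_value_Ioo hlr hp hν
  · rw [Set.uIoo_of_ge h] at hν
    exact intermediate_value_Ioo' hlr hp hν

lemma sq_add_mul_add_sq_of_mem_cubicRoots (hx : x ∈ cubicRoots ν) (hy : y ∈ cubicRoots ν)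
    (hxy : x ≠ y) : x ^ 2 + x * y + y ^ 2 = 3 := by
  have h : (x - y) * (x ^ 2 + x * y + y ^ 2 - 3) = 0 := by
    simp only [cubicRoots, Set.mem_ofPred_eq] at hx hy
    linear_combination hy - hx
  linarith [(mul_eq_zero.mp h).resolve_left (sub_ne_zero.mpr hxy)]

lemma add_add_eq_zero_of_mem_cubicRoots (hx : x ∈ cubicRoots ν) (hy : y ∈ cubicRoots ν)
    (hz : z ∈ cubicRoots ν) (hxy : x ≠ y) (hxz : x ≠ z) (hyz : y ≠ z) : x + y + z = 0 := by
  have hy' := sq_add_mul_add_sq_of_mem_cubicRoots hx hy hxy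
  have hz' := sq_add_mul_add_sq_of_mem_cubicRoots hx hz hxz
  have h : (y - z) * (x + y + z) = 0 := by linear_combination hy' - hz'
  exact (mul_eq_zero.mp h).resolve_left (sub_ne_zero.mpr hyz)

lemma cubicRoots_eq_triple (hx : x ∈ cubicRoots ν) (hy : y ∈ cubicRoots ν)
    (hz : z ∈ cubicRoots ν) (hxy : x ≠ y) (hxz : x ≠ z) (hyz : y ≠ z) :
    cubicRoots ν = {x, y, z} := by
  refine subset_antisymm (fun w hw ↦ ?_) (by simp [Set.insert_subset_iff, hx, hy, hz])
  by_contra hne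
  simp only [Set.mem_insert_iff, Set.mem_singleton_iff, not_or] at hne
  have hxyz := add_add_eq_zero_of_mem_cubicRoots hx hy hz hxy hxz hyz
  have hxyw := add_add_eq_zero_of_mem_cubicRoots hx hy hw hxy (Ne.symm hne.1) (Ne.symm hne.2.1)
  exact hne.2.2 (by linarith)

lemma cubicRoots_eq_singleton (hx : x ∈ cubicRoots ν) (hx2 : 2 < |x|) : cubicRoots ν = {x} := by
  refine subset_antisymm (fun y hy ↦ ?_) (Set.singleton_subset_iff.mpr hx)
  by_contra hxy
  have h := sq_add_mul_add_sq_of_mem_cubicRoots hx hy (Ne.symm hxy)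
  nlinarith [sq_abs x, sq_nonneg (y + x / 2)]

lemma cubicRoots_two : cubicRoots 2 = {1, -2} := by
  ext s
  simp only [cubicRoots, Set.mem_ofPred_eq, Set.mem_insert_iff, Set.mem_singleton_iff]
  constructor
  · intro h
    have h' : (s - 1) ^ 2 * (s + 2) = 0 := by linear_combination -h
    rcases mul_eq_zero.mp h' with h1 | h2
    · exact Or.inl (sub_eq_zero.mp (pow_eq_zero_iff two_ne_zero |>.mp h1))
    · exact Or.inr (by linarith)
  · rintro (rfl | rfl) <;> norm_num

lemma encard_cubicRoots_of_abs_lt (hν : |ν| < 2) : (cubicRoots ν).encard = 3 := by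
  obtain ⟨hν₁, hν₂⟩ := abs_lt.mp hν
  obtain ⟨x, hxI, hx⟩ := exists_mem_cubicRoots_Ioo (ν := ν) (l := -2) (r := -1) (by norm_num)
    (by rw [Set.uIoo_of_ge (by norm_num)]; constructor <;> norm_num <;> linarith)
  obtain ⟨y, hyI, hy⟩ := exists_mem_cubicRoots_Ioo (ν := ν) (l := -1) (r := 1) (by norm_num)
    (by rw [Set.uIoo_of_le (by norm_num)]; constructor <;> norm_num <;> linarith)
  obtain ⟨z, hzI, hz⟩ := exists_mem_cubicRoots_Ioo (ν := ν) (l := 1) (r := 2) (by norm_num)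
    (by rw [Set.uIoo_of_ge (by norm_num)]; constructor <;> norm_num <;> linarith)
  have hxy : x ≠ y := (hxI.2.trans hyI.1).ne
  have hxz : x ≠ z := by linarith [hxI.2, hzI.1]
  have hyz : y ≠ z := (hyI.2.trans hzI.1).ne
  rw [cubicRoots_eq_triple hx hy hz hxy hxz hyz, Set.encard_eq_three]
  exact ⟨x, y, z, hxy, hxz, hyz, rfl⟩

lemma encard_cubicRoots_of_abs_eq (hν : |ν| = 2) : (cubicRoots ν).encard = 2 := by
  rcases (abs_eq zero_le_two).mp hν with rfl | rfl
  · rw [cubicRoots_two, Set.encard_pair (by norm_num)]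
  · rw [encard_cubicRoots_neg, cubicRoots_two, Set.encard_pair (by norm_num)]

lemma encard_cubicRoots_of_two_lt (hν : 2 < ν) : (cubicRoots ν).encard = 1 := by
  have hν' : ν < 3 * (-ν) - (-ν) ^ 3 := by
    nlinarith [mul_pos (by linarith : (0 : ℝ) < ν) (by nlinarith : (0 : ℝ) < ν ^ 2 - 4)]
  obtain ⟨x, hxI, hx⟩ := exists_mem_cubicRoots_Ioo (ν := ν) (l := -ν) (r := -2) (by linarith)
    (by rw [Set.uIoo_of_ge (by norm_num; linarith)]; constructor <;> norm_num <;> linarith)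
  rw [cubicRoots_eq_singleton hx (lt_abs.mpr (Or.inr (by linarith [hxI.2]))),
    Set.encard_singleton]

lemma encard_cubicRoots_of_two_lt_abs (hν : 2 < |ν|) : (cubicRoots ν).encard = 1 := by
  rcases lt_abs.mp hν with h | h
  · exact encard_cubicRoots_of_two_lt h
  · rw [← neg_neg ν, encard_cubicRoots_neg]
    exact encard_cubicRoots_of_two_lt h

end cubicRoots

lemma setOf_cubic_eq_image_cubicRoots {a c m μ : ℝ} (hc : c ≠ 0) (hm : m ≠ 0)
    (ham : a = 3 * c * m ^ 2) :
    {t : ℝ | (a - c * t ^ 2) * t = μ} = (m * ·) '' cubicRoots (μ / (c * m ^ 3)) := by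
  have hscale : ∀ s : ℝ, (a - c * (m * s) ^ 2) * (m * s) = c * m ^ 3 * (3 * s - s ^ 3) := by
    intro s; rw [ham]; ring
  ext t
  simp only [cubicRoots, Set.mem_ofPred_eq, Set.mem_image,
    eq_div_iff (by positivity : c * m ^ 3 ≠ 0)]
  constructor
  · intro ht
    refine ⟨t / m, ?_, mul_div_cancel₀ t hm⟩
    rw [mul_comm, ← hscale, mul_div_cancel₀ t hm, ht]
  · rintro ⟨s, hs, rfl⟩
    rw [hscale, mul_comm, hs]

lemma setOf_inner_eq_image_smul {H : Type*} [NormedAddCommGroup H] [InnerProductSpace ℝ H]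
    {a b μ : ℝ} (hμ : μ ≠ 0) {U : H} (hU : U ≠ 0) :
    {u : H | ∀ v : H, (a - b * ‖u‖ ^ 2) * ⟪u, v⟫ = μ * ⟪U, v⟫} =
      (· • U) '' {t : ℝ | (a - b * ‖U‖ ^ 2 * t ^ 2) * t = μ} := by
  have norm_sq_smul : ∀ t : ℝ, ‖t • U‖ ^ 2 = t ^ 2 * ‖U‖ ^ 2 := fun t ↦ by
    rw [norm_smul, mul_pow, Real.norm_eq_abs, sq_abs]
  ext u
  simp only [Set.mem_ofPred_eq, Set.mem_image, ← real_inner_smul_left]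
  constructor
  · intro hu
    have hsmul : (a - b * ‖u‖ ^ 2) • u = μ • U := ext_inner_right ℝ hu
    have hk : a - b * ‖u‖ ^ 2 ≠ 0 := by
      rintro hk
      rw [hk, zero_smul, eq_comm, smul_eq_zero] at hsmul
      exact hsmul.elim hμ hU
    set t := μ / (a - b * ‖u‖ ^ 2) with ht
    have hu_eq : u = t • U := by
      rw [ht, div_eq_inv_mul, ← smul_smul, ← hsmul, smul_smul, inv_mul_cancel₀ hk, one_smul]
    refine ⟨t, ?_, hu_eq.symm⟩
    calc (a - b * ‖U‖ ^ 2 * t ^ 2) * t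
        _ = (a - b * ‖t • U‖ ^ 2) * t := by rw [norm_sq_smul]; ring
        _ = μ := by rw [← hu_eq, ht, mul_div_cancel₀ μ hk]
  · rintro ⟨t, ht, rfl⟩ v
    rw [norm_sq_smul, smul_smul, ← ht]
    ring_nf

theorem stmt_18_general {H : Type*} [NormedAddCommGroup H] [InnerProductSpace ℝ H]
    (a b μ : ℝ) (ha : 0 < a) (hb : 0 < b) (hμ : μ ≠ 0)
    (φ : H →L[ℝ] ℝ) (U : H) (hU : ∀ v : H, ⟪U, v⟫ = φ v) (hU0 : U ≠ 0) :
    ((0 < |μ| ∧ |μ| < 2 * a * Real.sqrt (3 * a * b) / (9 * b * ‖U‖)) →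
      {u : H | ∀ v : H, (a - b * ‖u‖ ^ 2) * ⟪u, v⟫ = μ * φ v}.encard = 3) ∧
    (|μ| = 2 * a * Real.sqrt (3 * a * b) / (9 * b * ‖U‖) →
      {u : H | ∀ v : H, (a - b * ‖u‖ ^ 2) * ⟪u, v⟫ = μ * φ v}.encard = 2) ∧
    (2 * a * Real.sqrt (3 * a * b) / (9 * b * ‖U‖) < |μ| →
      {u : H | ∀ v : H, (a - b * ‖u‖ ^ 2) * ⟪u, v⟫ = μ * φ v}.encard = 1) ∧
    (∀ u ∈ {u : H | ∀ v : H, (a - b * ‖u‖ ^ 2) * ⟪u, v⟫ = μ * φ v}, ∃ t : ℝ, u = t • U) := by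
  have hUn : 0 < ‖U‖ := norm_pos_iff.mpr hU0
  set c := b * ‖U‖ ^ 2 with hc_def
  set m := Real.sqrt (3 * a * b) / (3 * b * ‖U‖) with hm_def
  have hc : 0 < c := by positivity
  have hm : 0 < m := by positivity
  have hsq : Real.sqrt (3 * a * b) ^ 2 = 3 * a * b := Real.sq_sqrt (by positivity)
  have ham : a = 3 * c * m ^ 2 := by
    rw [hc_def, hm_def, div_pow, hsq]
    field_simp
  have hthreshold : 2 * a * Real.sqrt (3 * a * b) / (9 * b * ‖U‖) = 2 * (c * m ^ 3) := by
    have hsqrt : Real.sqrt (3 * a * b) = 3 * b * ‖U‖ * m := by rw [hm_def]; field_simp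
    rw [hsqrt]
    nth_rewrite 1 [ham]
    field_simp
    norm_num
  have hS : {u : H | ∀ v : H, (a - b * ‖u‖ ^ 2) * ⟪u, v⟫ = μ * φ v} =
      (· • U) '' ((m * ·) '' cubicRoots (μ / (c * m ^ 3))) := by
    simp_rw [← hU, setOf_inner_eq_image_smul hμ hU0, ← hc_def,
      setOf_cubic_eq_image_cubicRoots hc.ne' hm.ne' ham]
  have hcard : {u : H | ∀ v : H, (a - b * ‖u‖ ^ 2) * ⟪u, v⟫ = μ * φ v}.encard =
      (cubicRoots (μ / (c * m ^ 3))).encard := by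
    rw [hS, (smul_left_injective ℝ hU0).encard_image, (mul_right_injective₀ hm.ne').encard_image]
  have habs : |μ / (c * m ^ 3)| = |μ| / (c * m ^ 3) := by
    rw [abs_div, abs_of_pos (show 0 < c * m ^ 3 by positivity)]
  rw [hthreshold, hcard]
  refine ⟨fun h ↦ ?_, fun h ↦ ?_, fun h ↦ ?_, ?_⟩
  · exact encard_cubicRoots_of_abs_lt (by rw [habs, div_lt_iff₀ (by positivity)]; linarith [h.2])
  · exact encard_cubicRoots_of_abs_eq (by rw [habs, h]; field_simp)
  · exact encard_cubicRoots_of_two_lt_abs (by rw [habs, lt_div_iff₀ (by positivity)]; linarith)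
  · rw [hS]
    rintro _ ⟨t, -, rfl⟩
    exact ⟨t, rfl⟩

theorem stmt_18 {H : Type*} [NormedAddCommGroup H] [InnerProductSpace ℝ H] [CompleteSpace H]
    (a b μ : ℝ) (ha : 0 < a) (hb : 0 < b) (hμ : μ ≠ 0)
    (φ : H →L[ℝ] ℝ) (U : H) (hU : ∀ v : H, ⟪U, v⟫ = φ v) (hU0 : U ≠ 0) :
    ((0 < |μ| ∧ |μ| < 2 * a * Real.sqrt (3 * a * b) / (9 * b * ‖U‖)) →
      {u : H | ∀ v : H, (a - b * ‖u‖ ^ 2) * ⟪u, v⟫ = μ * φ v}.encard = 3) ∧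
    (|μ| = 2 * a * Real.sqrt (3 * a * b) / (9 * b * ‖U‖) →
      {u : H | ∀ v : H, (a - b * ‖u‖ ^ 2) * ⟪u, v⟫ = μ * φ v}.encard = 2) ∧
    (2 * a * Real.sqrt (3 * a * b) / (9 * b * ‖U‖) < |μ| →
      {u : H | ∀ v : H, (a - b * ‖u‖ ^ 2) * ⟪u, v⟫ = μ * φ v}.encard = 1) ∧
    (∀ u ∈ {u : H | ∀ v : H, (a - b * ‖u‖ ^ 2) * ⟪u, v⟫ = μ * φ v}, ∃ t : ℝ, u = t • U) :=
  stmt_18_general a b μ ha hb hμ φ U hU hU0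
end
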